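/- Let S = ℂ[z₀,z₁,…,zₙ] be the graded polynomial ring. Let f¹,…,f^{r₁} ∈ S^{r₀} be column vectors such that for each j all components of f^j are homogeneous of the same degree d_j and not every component of f^j is divisible by z₀ (so that f^j is the homogenization of its dehomogenization F^j, where F^j(z₁,…,zₙ) = f^j(1,z₁,…,zₙ) ∈ ℂ[z₁,…,zₙ]^{r₀}). Let J ⊆ S^{r₀} be the S-submodule generated by f¹,…,f^{r₁}. Assume that the quotient module S^{r₀}/J is Cohen–Macaulay and that z₀ does not belong to any associated prime ideal of S^{r₀}/J (i.e., no irreducible component of the zero set of J in ℙⁿ is contained in the hyperplane at infinity {z₀ = 0}). Then for every Φ ∈ ℂ[z₁,…,zₙ]^{r₀} belonging to the ℂ[z₁,…,zₙ]-submodule generated by F¹,…,F^{r₁}, there exist polynomials Ψ¹,…,Ψ^{r₁} ∈ ℂ[z₁,…,zₙ] such that F¹Ψ¹ + ⋯ + F^{r₁}Ψ^{r₁} = Φ and, for every j, every component of F^jΨ^j has total degree at most the total degree of Φ (the maximum of the total degrees of the components of Φ). -/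

import Mathlib

open MvPolynomial

/-- The depth of the module `M` with respect to the ideal `I`: the supremum of the
lengths of `M`-regular sequences consisting of elements of `I`. -/
noncomputable def idealDepth {R : Type*} [CommRing R] (I : Ideal R)
    (M : Type*) [AddCommGroup M] [Module R M] : ℕ∞ :=
  sSup {n : ℕ∞ | ∃ rs : List R, (∀ r ∈ rs, r ∈ I) ∧
    RingTheory.Sequence.IsRegular M rs ∧ (rs.length : ℕ∞) = n}

/-- The Krull dimension of the module `M` over `R`: the Krull dimension of
`R / (annihilator of M)`. -/
noncomputable def moduleKrullDim (R : Type*) [CommRing R]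
    (M : Type*) [AddCommGroup M] [Module R M] : WithBot ℕ∞ :=
  ringKrullDim (R ⧸ Module.annihilator R M)

/-- `M` is a Cohen–Macaulay `R`-module if for every prime `𝔭` in the support of `M`,
the depth of the localization `M_𝔭` with respect to the maximal ideal of `R_𝔭` equals
the Krull dimension of the module `M_𝔭` over `R_𝔭`. -/
def IsCohenMacaulayModule (R : Type*) [CommRing R]
    (M : Type*) [AddCommGroup M] [Module R M] : Prop :=
  ∀ 𝔭 : PrimeSpectrum R, 𝔭 ∈ Module.support R M →
    ((idealDepth (IsLocalRing.maximalIdeal (Localization.AtPrime 𝔭.asIdeal))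
        (LocalizedModule 𝔭.asIdeal.primeCompl M)) : WithBot ℕ∞)
      = moduleKrullDim (Localization.AtPrime 𝔭.asIdeal)
          (LocalizedModule 𝔭.asIdeal.primeCompl M)

/-!
Write `Φ = ∑ cⱼ Fʲ`. Homogenizing the `cⱼ` and padding with powers of `z₀` turns this into a
homogeneous element of `J` that dehomogenizes to `Φ`. A homogeneous polynomial is determined by its
degree and its dehomogenization, so that element is `z₀ᵏ φ`, where `φ` is the homogenization of `Φ`
in degree `t = deg Φ`. Since `z₀` lies in no associated prime of `S^{r₀}/J`, it is a nonzerodivisor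
there, hence `φ ∈ J`. Keeping only the degree `t` parts of a representation `φ = ∑ aⱼ fʲ` gives
`φ = ∑ ψⱼ fʲ` with every `ψⱼ fʲ` homogeneous of degree `t`, and dehomogenizing yields the `Ψʲ`:
dehomogenization does not raise the total degree.
-/

namespace MvPolynomial

section Dehomogenize

variable {R : Type*} [CommSemiring R] {n : ℕ}

noncomputable def dehomogenize (n : ℕ) :
    MvPolynomial (Fin (n + 1)) R →ₐ[R] MvPolynomial (Fin n) R :=
  aeval (Fin.cases 1 fun i => X i)

theorem dehomogenize_X_zero : dehomogenize n (X 0 : MvPolynomial (Fin (n + 1)) R) = 1 := by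
  simp [dehomogenize]

theorem dehomogenize_rename_succ (q : MvPolynomial (Fin n) R) :
    dehomogenize n (rename Fin.succ q) = q := by
  rw [dehomogenize, aeval_rename]
  convert aeval_X_left_apply q
  ext i
  simp

theorem dehomogenize_eq_eval_one_finSuccEquiv (p : MvPolynomial (Fin (n + 1)) R) :
    dehomogenize n p = (finSuccEquiv R n p).eval 1 := by
  rw [dehomogenize]
  induction p using MvPolynomial.induction_on with
  | C a => simp [finSuccEquiv_apply, algebraMap_eq]
  | add p q hp hq => rw [map_add, map_add, Polynomial.eval_add, hp, hq]
  | mul_X p i hp =>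
    rw [map_mul, map_mul, Polynomial.eval_mul, hp, aeval_X]
    cases i using Fin.cases <;> simp [finSuccEquiv_X_zero, finSuccEquiv_X_succ]

theorem totalDegree_dehomogenize_le (p : MvPolynomial (Fin (n + 1)) R) :
    (dehomogenize n p).totalDegree ≤ p.totalDegree := by
  rw [dehomogenize_eq_eval_one_finSuccEquiv, Polynomial.eval_eq_sum_range]
  refine (totalDegree_finsetSum _ _).trans (Finset.sup_le fun k _ => ?_)
  rw [one_pow, mul_one]
  by_cases hk : (finSuccEquiv R n p).coeff k = 0
  · simp [hk]
  · exact (Nat.le_add_right _ _).trans (totalDegree_coeff_finSuccEquiv_add_le p k hk)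

theorem IsHomogeneous.homogeneousComponent_dehomogenize {p : MvPolynomial (Fin (n + 1)) R}
    {a : ℕ} (hp : p.IsHomogeneous a) {k : ℕ} (hk : k ≤ a) :
    homogeneousComponent (a - k) (dehomogenize n p) = (finSuccEquiv R n p).coeff k := by
  have hdeg : (finSuccEquiv R n p).natDegree < a + 1 := by
    rw [natDegree_finSuccEquiv]
    exact Nat.lt_succ_of_le ((degreeOf_le_totalDegree p 0).trans hp.totalDegree_le)
  have hcoeff (l : ℕ) (hl : l ≤ a) := hp.finSuccEquiv_coeff_isHomogeneous l (a - l) (by omega)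
  rw [dehomogenize_eq_eval_one_finSuccEquiv, Polynomial.eval_eq_sum_range' hdeg, map_sum,
    Finset.sum_eq_single_of_mem k (Finset.mem_range.mpr (Nat.lt_succ_of_le hk))]
  · rw [one_pow, mul_one, homogeneousComponent_eq_self (hcoeff k hk)]
  · intro l hl hlk
    rw [Finset.mem_range] at hl
    rw [one_pow, mul_one, homogeneousComponent_of_mem (hcoeff l (by omega)), if_neg (by omega)]

theorem IsHomogeneous.eq_zero_of_dehomogenize_eq_zero {p : MvPolynomial (Fin (n + 1)) R}
    {a : ℕ} (hp : p.IsHomogeneous a) (h : dehomogenize n p = 0) : p = 0 := by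
  suffices finSuccEquiv R n p = 0 by simpa using this
  ext k : 1
  rcases le_or_gt k a with hk | hk
  · rw [← hp.homogeneousComponent_dehomogenize hk, h, map_zero, Polynomial.coeff_zero]
  · refine Polynomial.coeff_eq_zero_of_natDegree_lt ?_
    rw [natDegree_finSuccEquiv]
    exact ((degreeOf_le_totalDegree p 0).trans hp.totalDegree_le).trans_lt hk

/-- Homogenization in degree `t`; it inverts `dehomogenize` only when `p.totalDegree ≤ t`,
as the components of `p` above degree `t` are dropped. -/
noncomputable def homogenize (t : ℕ) (p : MvPolynomial (Fin n) R) :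
    MvPolynomial (Fin (n + 1)) R :=
  ∑ k ∈ Finset.range (t + 1), X 0 ^ (t - k) * rename Fin.succ (homogeneousComponent k p)

theorem isHomogeneous_homogenize (t : ℕ) (p : MvPolynomial (Fin n) R) :
    (homogenize t p).IsHomogeneous t := by
  refine IsHomogeneous.sum _ _ _ fun k hk => ?_
  convert (isHomogeneous_X_pow (0 : Fin (n + 1)) (t - k)).mul
    (homogeneousComponent_isHomogeneous k p).rename_isHomogeneous
  rw [Finset.mem_range] at hk
  omega

theorem dehomogenize_homogenize {t : ℕ} {p : MvPolynomial (Fin n) R} (h : p.totalDegree ≤ t) :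
    dehomogenize n (homogenize t p) = p := by
  simp only [homogenize, map_sum, map_mul, map_pow, dehomogenize_rename_succ, dehomogenize_X_zero,
    one_pow, one_mul]
  rw [← Finset.sum_subset (Finset.range_subset_range.mpr (Nat.succ_le_succ h)),
    sum_homogeneousComponent]
  intro k _ hk
  rw [Finset.mem_range, not_lt] at hk
  exact homogeneousComponent_eq_zero _ _ hk

end Dehomogenize

section HomogeneousComponent

attribute [local instance] MvPolynomial.gradedAlgebra

variable {σ R : Type*} [CommSemiring R]

theorem homogeneousComponent_mul_of_isHomogeneous_right {d : ℕ} (t : ℕ) (a : MvPolynomial σ R)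
    {b : MvPolynomial σ R} (hb : b.IsHomogeneous d) :
    homogeneousComponent t (a * b) = (if d ≤ t then homogeneousComponent (t - d) a else 0) * b := by
  rw [← decomposition.decompose'_apply, ← decomposition.decompose'_apply, ite_mul, zero_mul]
  exact DirectSum.coe_decompose_mul_of_right_mem (homogeneousSubmodule σ R) t hb

theorem exists_isHomogeneous_sum_smul_eq_of_mem_span {ι κ : Type*} [Fintype κ] {d : κ → ℕ}
    {f : κ → ι → MvPolynomial σ R} (hf : ∀ j i, (f j i).IsHomogeneous (d j))
    {φ : ι → MvPolynomial σ R} {t : ℕ} (hφ : ∀ i, (φ i).IsHomogeneous t)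
    (hmem : φ ∈ Submodule.span (MvPolynomial σ R) (Set.range f)) :
    ∃ ψ : κ → MvPolynomial σ R, ∑ j, ψ j • f j = φ ∧ ∀ j i, (ψ j * f j i).IsHomogeneous t := by
  obtain ⟨a, ha⟩ := (Submodule.mem_span_range_iff_exists_fun _).mp hmem
  set ψ := fun j => if d j ≤ t then homogeneousComponent (t - d j) (a j) else 0
  have hψ (j : κ) (i : ι) : ψ j * f j i = homogeneousComponent t (a j * f j i) :=
    (homogeneousComponent_mul_of_isHomogeneous_right t (a j) (hf j i)).symm
  refine ⟨ψ, ?_, fun j i => hψ j i ▸ homogeneousComponent_isHomogeneous _ _⟩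
  funext i
  simp only [Finset.sum_apply, Pi.smul_apply, smul_eq_mul, hψ, ← map_sum]
  rw [← homogeneousComponent_eq_self (hφ i), ← ha]
  simp only [Finset.sum_apply, Pi.smul_apply, smul_eq_mul]

end HomogeneousComponent

section Homogenize

variable {R : Type*} [CommRing R] {n : ℕ}

theorem X_zero_pow_mul_homogenize_eq {g : MvPolynomial (Fin (n + 1)) R} {N t : ℕ}
    (hg : g.IsHomogeneous N) (htN : t ≤ N) {p : MvPolynomial (Fin n) R} (hp : p.totalDegree ≤ t)
    (h : dehomogenize n g = p) : X 0 ^ (N - t) * homogenize t p = g := by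
  rw [← sub_eq_zero]
  refine IsHomogeneous.eq_zero_of_dehomogenize_eq_zero (a := N) ?_ ?_
  · refine IsHomogeneous.sub ?_ hg
    convert (isHomogeneous_X_pow (0 : Fin (n + 1)) (N - t)).mul (isHomogeneous_homogenize t p)
    omega
  · rw [map_sub, map_mul, map_pow, dehomogenize_homogenize hp, h, dehomogenize_X_zero, one_pow,
      one_mul, sub_self]

theorem exists_X_zero_pow_smul_homogenize_mem_span {ι κ : Type*} [Fintype κ] {d : κ → ℕ}
    {f : κ → ι → MvPolynomial (Fin (n + 1)) R} (hf : ∀ j i, (f j i).IsHomogeneous (d j))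
    {Φ : ι → MvPolynomial (Fin n) R}
    (hΦ : Φ ∈ Submodule.span (MvPolynomial (Fin n) R)
      (Set.range fun j i => dehomogenize n (f j i)))
    {t : ℕ} (ht : ∀ i, (Φ i).totalDegree ≤ t) :
    ∃ k, (X 0 : MvPolynomial (Fin (n + 1)) R) ^ k • (fun i => homogenize t (Φ i)) ∈
      Submodule.span (MvPolynomial (Fin (n + 1)) R) (Set.range f) := by
  obtain ⟨c, hc⟩ := (Submodule.mem_span_range_iff_exists_fun _).mp hΦ
  set e := fun j => (c j).totalDegree
  set N := max t (Finset.univ.sup fun j => e j + d j)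
  have heN (j : κ) : e j + d j ≤ N :=
    (Finset.le_sup (f := fun j => e j + d j) (Finset.mem_univ j)).trans (le_max_right _ _)
  set b := fun j => X 0 ^ (N - (e j + d j)) * homogenize (e j) (c j)
  refine ⟨N - t, ?_⟩
  suffices (X 0 : MvPolynomial (Fin (n + 1)) R) ^ (N - t) • (fun i => homogenize t (Φ i)) =
      ∑ j, b j • f j by
    rw [this]
    exact Submodule.sum_mem _ fun j _ => Submodule.smul_mem _ _ (Submodule.subset_span ⟨j, rfl⟩)
  funext i
  simp only [Pi.smul_apply, smul_eq_mul, Finset.sum_apply]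
  refine X_zero_pow_mul_homogenize_eq (IsHomogeneous.sum _ _ _ fun j _ => ?_) (le_max_left _ _)
    (ht i) ?_
  · convert ((isHomogeneous_X_pow _ _).mul (isHomogeneous_homogenize _ _)).mul (hf j i)
    have := heN j
    omega
  · have hdc (j : κ) : dehomogenize n (homogenize (e j) (c j)) = c j :=
      dehomogenize_homogenize le_rfl
    simp [b, hdc, dehomogenize_X_zero, ← hc]

end Homogenize

end MvPolynomial

theorem Submodule.mem_of_pow_smul_mem_of_forall_notMem_associatedPrimes {R M : Type*}
    [CommRing R] [IsNoetherianRing R] [AddCommGroup M] [Module R M] {N : Submodule R M} {x : R}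
    (hx : ∀ p ∈ associatedPrimes R (M ⧸ N), x ∉ p) {k : ℕ} {m : M} (h : x ^ k • m ∈ N) :
    m ∈ N := by
  have hreg : IsSMulRegular (M ⧸ N) x := by
    have : x ∉ ⋃ p ∈ associatedPrimes R (M ⧸ N), (p : Set R) := by simpa using hx
    rw [biUnion_associatedPrimes_eq_compl_regular] at this
    simpa using this
  rw [← Submodule.Quotient.mk_eq_zero] at h ⊢
  exact (hreg.pow k).right_eq_zero_of_smul h

theorem generalized_max_noether_general (n r₀ r₁ : ℕ)
    (d : Fin r₁ → ℕ)
    (f : Fin r₁ → (Fin r₀ → MvPolynomial (Fin (n + 1)) ℂ))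
    (hhom : ∀ j i, (f j i).IsHomogeneous (d j))
    (hass : ∀ 𝔭 ∈ associatedPrimes (MvPolynomial (Fin (n + 1)) ℂ)
      ((Fin r₀ → MvPolynomial (Fin (n + 1)) ℂ) ⧸
        Submodule.span (MvPolynomial (Fin (n + 1)) ℂ) (Set.range f)),
      (X 0 : MvPolynomial (Fin (n + 1)) ℂ) ∉ 𝔭)
    (F : Fin r₁ → (Fin r₀ → MvPolynomial (Fin n) ℂ))
    (hF : ∀ j i, F j i = aeval (Fin.cases 1 fun i => X i) (f j i))
    (Φ : Fin r₀ → MvPolynomial (Fin n) ℂ)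
    (hΦ : Φ ∈ Submodule.span (MvPolynomial (Fin n) ℂ) (Set.range F)) :
    ∃ Ψ : Fin r₁ → MvPolynomial (Fin n) ℂ,
      (∑ j, Ψ j • F j = Φ) ∧
      ∀ j i, (Ψ j * F j i).totalDegree ≤ Finset.univ.sup fun i => (Φ i).totalDegree := by
  set t := Finset.univ.sup fun i => (Φ i).totalDegree
  have hΦt (i : Fin r₀) : (Φ i).totalDegree ≤ t :=
    Finset.le_sup (f := fun i => (Φ i).totalDegree) (Finset.mem_univ i)
  obtain rfl : F = fun j i => dehomogenize n (f j i) := funext fun j => funext (hF j)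
  obtain ⟨k, hk⟩ := exists_X_zero_pow_smul_homogenize_mem_span hhom hΦ hΦt
  obtain ⟨ψ, hψf, hψt⟩ := exists_isHomogeneous_sum_smul_eq_of_mem_span hhom
    (fun i => isHomogeneous_homogenize t (Φ i))
    (Submodule.mem_of_pow_smul_mem_of_forall_notMem_associatedPrimes hass hk)
  refine ⟨fun j => dehomogenize n (ψ j), funext fun i => ?_, fun j i => ?_⟩
  · have := congrArg (dehomogenize n) (congrFun hψf i)
    simpa [dehomogenize_homogenize (hΦt i)] using this
  · rw [← map_mul]
    exact (totalDegree_dehomogenize_le _).trans (hψt j i).totalDegree_le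

/-- **Generalized Max Noether `AF+BG` theorem.**
Let `f¹,…,f^{r₁} ∈ S^{r₀}`, `S = ℂ[z₀,…,zₙ]`, be columns whose components are
homogeneous of degree `dⱼ` and not all divisible by `z₀`, generating the graded
submodule `J ⊆ S^{r₀}`. Assume `S^{r₀}/J` is Cohen–Macaulay and `z₀` lies in no
associated prime of `S^{r₀}/J`. If `Φ` lies in the `ℂ[z₁,…,zₙ]`-submodule generated
by the dehomogenizations `Fʲ = fʲ(1,z₁,…,zₙ)`, then `Φ = ∑ⱼ Ψʲ•Fʲ` with
`deg (FʲᵢΨʲ) ≤ deg Φ` for all `i,j`. -/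
theorem generalized_max_noether (n r₀ r₁ : ℕ)
    (d : Fin r₁ → ℕ)
    (f : Fin r₁ → (Fin r₀ → MvPolynomial (Fin (n + 1)) ℂ))
    (hhom : ∀ j i, (f j i).IsHomogeneous (d j))
    (hz0 : ∀ j, ∃ i, ¬ (X 0 : MvPolynomial (Fin (n + 1)) ℂ) ∣ f j i)
    (hCM : IsCohenMacaulayModule (MvPolynomial (Fin (n + 1)) ℂ)
      ((Fin r₀ → MvPolynomial (Fin (n + 1)) ℂ) ⧸
        Submodule.span (MvPolynomial (Fin (n + 1)) ℂ) (Set.range f)))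
    (hass : ∀ 𝔭 ∈ associatedPrimes (MvPolynomial (Fin (n + 1)) ℂ)
      ((Fin r₀ → MvPolynomial (Fin (n + 1)) ℂ) ⧸
        Submodule.span (MvPolynomial (Fin (n + 1)) ℂ) (Set.range f)),
      (X 0 : MvPolynomial (Fin (n + 1)) ℂ) ∉ 𝔭)
    (F : Fin r₁ → (Fin r₀ → MvPolynomial (Fin n) ℂ))
    (hF : ∀ j i, F j i = aeval (Fin.cases 1 fun i => X i) (f j i))
    (Φ : Fin r₀ → MvPolynomial (Fin n) ℂ)
    (hΦ : Φ ∈ Submodule.span (MvPolynomial (Fin n) ℂ) (Set.range F)) :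
    ∃ Ψ : Fin r₁ → MvPolynomial (Fin n) ℂ,
      (∑ j, Ψ j • F j = Φ) ∧
      ∀ j i, (Ψ j * F j i).totalDegree ≤ Finset.univ.sup fun i => (Φ i).totalDegree :=
  generalized_max_noether_general n r₀ r₁ d f hhom hass F hF Φ hΦ
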